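/- arXiv:2102.03844 — 4 statements merged into one kernel-verified Lean document; each statement's English description precedes it below -/
import Mathlib

section
/- Let (γ_k) be any sequence of real numbers with γ_k ≥ 1 for all k and γ_k → ∞. Let s, v ∈ ℝ be such that v ∈ φ_∞(s), i.e., either (s < 1 and v = 0) or (s = 1 and v ≥ 0). Then there exists a sequence (s_k) of real numbers with s_k → s and φ_{γ_k}(s_k) = (max(s_k,0))^{γ_k+1} → v as k → ∞. (This is the 'recovery sequence' half of the convergence of the graphs φ_γ to φ_∞ as γ → ∞.) -/
/-!
For `s < 1` the constant sequence works, since `(s⁺)^p → 0` for a base in `[0, 1)`.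
For `s = 1` take `s_k = exp (a_k / p_k)` with `p_k = γ_k + 1`, so that `s_k ^ p_k = exp a_k`:
it suffices that `a_k / p_k → 0` and `exp a_k → v`, which holds for `a_k = log v` when `v > 0`
and for `a_k = -√p_k` when `v = 0`.
-/

open Filter Topology Real

variable {ι : Type*} {l : Filter ι} {p : ι → ℝ}

lemma exp_div_rpow (a : ℝ) {p : ℝ} (hp : p ≠ 0) : exp (a / p) ^ p = exp a := by
  rw [← exp_mul, div_mul_cancel₀ _ hp]

lemma exists_tendsto_div_zero_tendsto_exp (hp : Tendsto p l atTop) {v : ℝ} (hv : 0 ≤ v) :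
    ∃ a : ι → ℝ, Tendsto (fun k => a k / p k) l (𝓝 0) ∧ Tendsto (fun k => exp (a k)) l (𝓝 v) := by
  rcases hv.eq_or_lt with rfl | hv
  · have hsqrt : Tendsto (fun k => √(p k)) l atTop := tendsto_sqrt_atTop.comp hp
    refine ⟨fun k => -√(p k), ?_, tendsto_exp_atBot.comp (tendsto_neg_atTop_atBot.comp hsqrt)⟩
    simpa only [neg_div, sqrt_div_self', one_div, neg_zero, Pi.inv_apply] using hsqrt.inv_tendsto_atTop.neg
  · refine ⟨fun _ => log v, ?_, ?_⟩
    · simpa only [div_eq_mul_inv, mul_zero, Pi.inv_apply] using hp.inv_tendsto_atTop.const_mul (log v)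
    · simp only [exp_log hv, tendsto_const_nhds]

lemma exists_tendsto_one_rpow_tendsto (hp : Tendsto p l atTop) {v : ℝ} (hv : 0 ≤ v) :
    ∃ x : ι → ℝ, (∀ k, 0 < x k) ∧ Tendsto x l (𝓝 1) ∧ Tendsto (fun k => x k ^ p k) l (𝓝 v) := by
  obtain ⟨a, ha0, hav⟩ := exists_tendsto_div_zero_tendsto_exp hp hv
  refine ⟨fun k => exp (a k / p k), fun k => exp_pos _, ?_, ?_⟩
  · simpa only [exp_zero, Function.comp_def] using (continuous_exp.tendsto 0).comp ha0
  · refine hav.congr' ?_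
    filter_upwards [hp.eventually_ne_atTop 0] with k hk
    exact (exp_div_rpow (a k) hk).symm

theorem stmt_0_general (γ : ℕ → ℝ) (hγ : Tendsto γ atTop atTop)
    (s v : ℝ) (hv : (s < 1 ∧ v = 0) ∨ (s = 1 ∧ 0 ≤ v)) :
    ∃ sk : ℕ → ℝ, Tendsto sk atTop (𝓝 s) ∧
      Tendsto (fun k => (max (sk k) 0) ^ (γ k + 1)) atTop (𝓝 v) := by
  have hp : Tendsto (fun k => γ k + 1) atTop atTop := tendsto_atTop_add_const_right _ 1 hγ
  rcases hv with ⟨hs, rfl⟩ | ⟨rfl, hv⟩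
  · have hs0 : -1 < max s 0 := by linarith [le_max_right s 0]
    exact ⟨fun _ => s, tendsto_const_nhds,
      (tendsto_rpow_atTop_of_base_lt_one _ hs0 (max_lt hs one_pos)).comp hp⟩
  · obtain ⟨x, hx_pos, hx_one, hx_pow⟩ := exists_tendsto_one_rpow_tendsto hp hv
    refine ⟨x, hx_one, ?_⟩
    simpa only [max_eq_left (hx_pos _).le] using hx_pow

/-- **Recovery sequence half of the graph convergence `φ_γ → φ_∞`.**
For `γ ≥ 1`, `φ_γ(s) = (s⁺)^(γ+1)`, and `v ∈ φ_∞(s)` iff (`s < 1` and `v = 0`) or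
(`s = 1` and `v ≥ 0`).  Given a sequence `γ_k ≥ 1` with `γ_k → ∞` and `v ∈ φ_∞(s)`,
there is a sequence `s_k → s` with `φ_{γ_k}(s_k) → v`. -/
theorem stmt_0 (γ : ℕ → ℝ) (hγ1 : ∀ k, 1 ≤ γ k) (hγ : Tendsto γ atTop atTop)
    (s v : ℝ) (hv : (s < 1 ∧ v = 0) ∨ (s = 1 ∧ 0 ≤ v)) :
    ∃ sk : ℕ → ℝ, Tendsto sk atTop (𝓝 s) ∧
      Tendsto (fun k => (max (sk k) 0) ^ (γ k + 1)) atTop (𝓝 v) :=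
  stmt_0_general γ hγ s v hv
end

section
/- (Lions–Aubin lemma, part (ii).) Let X₀, X, X₁ be Banach spaces, i : X₀ → X a compact linear operator, and j : X → X₁ an injective continuous linear map. Let T > 0 and 1 < q ≤ ∞. Suppose (u_k) is a sequence of strongly measurable functions [0,T] → X₀ that is bounded in L^∞(0,T; X₀), and for each k there exist g_k ∈ L^q(0,T; X₁) and a_k ∈ X₁ with j(i(u_k(t))) = a_k + ∫₀^t g_k(s) ds for a.e. t ∈ [0,T], with (g_k) bounded in L^q(0,T; X₁). Then there is a subsequence (u_{k_j}) and continuous functions v_j : [0,T] → X with v_j(t) = i(u_{k_j}(t)) for a.e. t, such that (v_j) converges uniformly on [0,T] to a continuous function v : [0,T] → X. -/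
/-!
Write `h_k(t) = a_k + ∫₀ᵗ g_k`. By Hölder's inequality,
`‖h_k(t) - h_k(s)‖ ≤ C' |t - s| ^ (1 - 1/q)`, so the `h_k` are uniformly Hölder continuous on
`[0, T]`. Since `h_k = j ∘ i ∘ u_k` almost everywhere and `‖u_k‖ ≤ C` almost everywhere, continuity
forces `h_k` to take all its values in `j(K)`, where `K` is the closure of the image under `i` of
the ball of radius `C`, compact because `i` is compact. On the compact set `K` the injective map `j`
is a uniform embedding, so `v_k := (j|_K)⁻¹ ∘ h_k` is an equicontinuous family of continuous
representatives of `i ∘ u_k` with values in `K`, and Arzelà–Ascoli yields a uniformly convergent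
subsequence.
-/

open MeasureTheory Filter Topology Set
open scoped ENNReal NNReal

theorem enorm_intervalIntegral_le_eLpNorm_mul_rpow {E : Type*} [NormedAddCommGroup E]
    [NormedSpace ℝ E] {f : ℝ → E} {q : ℝ≥0∞} (hq : 1 ≤ q) {s t : ℝ} (hst : s ≤ t)
    (hf : AEStronglyMeasurable f (volume.restrict (Ioc s t))) :
    ‖∫ x in s..t, f x‖ₑ ≤
      eLpNorm f q (volume.restrict (Ioc s t)) * ENNReal.ofReal (t - s) ^ (1 - 1 / q.toReal) := by
  rw [intervalIntegral.integral_of_le hst]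
  calc ‖∫ x in Ioc s t, f x‖ₑ ≤ eLpNorm f 1 (volume.restrict (Ioc s t)) :=
        (enorm_integral_le_lintegral_enorm f).trans_eq eLpNorm_one_eq_lintegral_enorm.symm
    _ ≤ _ := by
        simpa [Real.volume_Ioc] using eLpNorm_le_eLpNorm_mul_rpow_measure_univ hq hf

/- The Hölder exponent `1 - 1/q` as an element of `ℝ≥0`; for `q = ∞` it is `1`, because
`(∞ : ℝ≥0∞).toNNReal = 0` and `0⁻¹ = 0`. -/
theorem ENNReal.coe_one_sub_toNNReal_inv {q : ℝ≥0∞} (hq : 1 ≤ q) :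
    ((1 - q.toNNReal⁻¹ : ℝ≥0) : ℝ) = 1 - 1 / q.toReal := by
  have : q.toNNReal⁻¹ ≤ 1 := by
    rcases eq_or_ne q ∞ with rfl | hq'
    · simp
    · exact inv_le_one_of_one_le₀ <| by simpa using ENNReal.toNNReal_mono hq' hq
  rw [NNReal.coe_sub this, NNReal.coe_inv, ENNReal.coe_toNNReal_eq_toReal, one_div,
    NNReal.coe_one]

theorem ENNReal.one_sub_toNNReal_inv_pos {q : ℝ≥0∞} (hq : 1 < q) : 0 < 1 - q.toNNReal⁻¹ := by
  rcases eq_or_ne q ∞ with rfl | hq'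
  · simp
  · exact tsub_pos_of_lt <| inv_lt_one_of_one_lt₀ <| by
      simpa using (ENNReal.toNNReal_lt_toNNReal ENNReal.one_ne_top hq').2 hq

theorem holderOnWith_intervalIntegral {E : Type*} [NormedAddCommGroup E] [NormedSpace ℝ E]
    {f : ℝ → E} {q : ℝ≥0∞} (hq : 1 ≤ q) {a b : ℝ}
    (hf : AEStronglyMeasurable f (volume.restrict (Icc a b))) {M : ℝ≥0}
    (hM : eLpNorm f q (volume.restrict (Icc a b)) ≤ M) :
    HolderOnWith M (1 - q.toNNReal⁻¹) (fun t ↦ ∫ x in a..t, f x) (Icc a b) := by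
  have hint : IntegrableOn f (Icc a b) :=
    MemLp.integrable hq ⟨hf, hM.trans_lt ENNReal.coe_lt_top⟩
  have hII : ∀ t ∈ Icc a b, IntervalIntegrable f volume a t := fun t ht ↦
    (hint.mono_set (uIcc_subset_Icc (left_mem_Icc.2 (ht.1.trans ht.2)) ht)).intervalIntegrable
  have key : ∀ s ∈ Icc a b, ∀ t ∈ Icc a b, s ≤ t →
      edist (∫ x in a..t, f x) (∫ x in a..s, f x) ≤
        M * edist t s ^ ((1 - q.toNNReal⁻¹ : ℝ≥0) : ℝ) := by
    intro s hs t ht hst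
    have hmono : volume.restrict (Ioc s t) ≤ volume.restrict (Icc a b) :=
      Measure.restrict_mono (Ioc_subset_Icc_self.trans (Icc_subset_Icc hs.1 ht.2)) le_rfl
    rw [edist_eq_enorm_sub, intervalIntegral.integral_interval_sub_left (hII t ht) (hII s hs),
      ENNReal.coe_one_sub_toNNReal_inv hq, edist_dist, Real.dist_eq,
      abs_of_nonneg (sub_nonneg.2 hst)]
    refine (enorm_intervalIntegral_le_eLpNorm_mul_rpow hq hst (hf.mono_measure hmono)).trans ?_
    gcongr
    exact (eLpNorm_mono_measure f hmono).trans hM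
  intro s hs t ht
  rcases le_total s t with hst | hts
  · rw [edist_comm, edist_comm s]
    exact key s hs t ht hst
  · exact key t ht s hs hts

theorem HolderOnWith.uniformEquicontinuousOn {ι X Y : Type*} [PseudoEMetricSpace X]
    [PseudoEMetricSpace Y] {F : ι → X → Y} {C r : ℝ≥0} {s : Set X} (hr : 0 < r)
    (hF : ∀ i, HolderOnWith C r (F i) s) : UniformEquicontinuousOn F s := by
  rw [uniformEquicontinuousOn_iff_uniformContinuousOn]
  exact HolderOnWith.uniformContinuousOn (C := C)
    (fun x hx y hy ↦ UniformFun.edist_le.2 fun i ↦ hF i x hx y hy) hr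

theorem ae_norm_le_of_eLpNorm_top_le {α E : Type*} [MeasurableSpace α] {μ : Measure α}
    [NormedAddCommGroup E] {f : α → E} {C : ℝ≥0∞} (hC : C ≠ ∞) (hf : eLpNorm f ∞ μ ≤ C) :
    ∀ᵐ x ∂μ, ‖f x‖ ≤ C.toReal := by
  filter_upwards [ae_le_eLpNormEssSup (f := f)] with x hx
  simpa using ENNReal.toReal_mono hC (hx.trans ((eLpNorm_exponent_top (f := f)).symm.trans_le hf))

theorem ContinuousOn.mapsTo_of_ae_mem {X Y : Type*} [TopologicalSpace X] [MeasurableSpace X]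
    [TopologicalSpace Y] {μ : Measure X} [μ.IsOpenPosMeasure] {f : X → Y} {s : Set X}
    {F : Set Y} (hf : ContinuousOn f s) (hF : IsClosed F) (hs : s ⊆ closure (interior s))
    (h : ∀ᵐ x ∂μ.restrict s, f x ∈ F) : MapsTo f s F := by
  have hopen : IsOpen (interior s ∩ f ⁻¹' Fᶜ) :=
    (hf.mono interior_subset).isOpen_inter_preimage isOpen_interior hF.isOpen_compl
  have hnull : μ (interior s ∩ f ⁻¹' Fᶜ) = 0 := by
    rw [← Measure.restrict_eq_self μ (inter_subset_left.trans interior_subset)]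
    exact measure_mono_null inter_subset_right (ae_iff.1 h)
  have hinterior : MapsTo f (interior s) F := fun x hx ↦
    by_contra fun hfx ↦ (hopen.eq_empty_of_measure_zero hnull).subset ⟨hx, hfx⟩
  intro x hx
  simpa [hF.closure_eq] using closure_mono (image_subset_iff.2 hinterior)
    (((hf x hx).mono interior_subset).mem_closure_image (hs hx))

/- On a compact space the uniformity is determined by the topology, and `f` is an embedding. -/
theorem Continuous.isUniformInducing_of_compactSpace {X Y : Type*} [UniformSpace X]
    [CompactSpace X] [UniformSpace Y] [T2Space Y] {f : X → Y} (hf : Continuous f)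
    (hinj : Function.Injective f) : IsUniformInducing f :=
  isUniformInducing_iff_uniformSpace.2 <| unique_uniformity_of_compact
    (by rw [UniformSpace.toTopologicalSpace_comap, ← (hf.isClosedEmbedding hinj).eq_induced]) rfl

theorem Equicontinuous.exists_lift_of_isCompact {ι α X Y : Type*} [TopologicalSpace α]
    [UniformSpace X] [UniformSpace Y] [T2Space Y] {K : Set X} (hK : IsCompact K) {j : X → Y}
    (hj : Continuous j) (hinj : InjOn j K) {F : ι → α → Y} (hF : Equicontinuous F)
    (hFK : ∀ i x, F i x ∈ j '' K) :
    ∃ G : ι → α → X, Equicontinuous G ∧ ∀ i x, G i x ∈ K ∧ j (G i x) = F i x := by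
  have := isCompact_iff_compactSpace.1 hK
  choose G hGK hG using hFK
  let G' : ι → α → K := fun i x ↦ ⟨G i x, hGK i x⟩
  have hu : IsUniformInducing fun x : K ↦ j x :=
    (hj.comp continuous_subtype_val).isUniformInducing_of_compactSpace hinj.injective
  have hG'_equi : Equicontinuous G' := by
    rw [hu.equicontinuous_iff]
    simpa only [Function.comp_def, G', hG] using hF
  exact ⟨G, isUniformEmbedding_subtype_val.isUniformInducing.equicontinuous_iff.1 hG'_equi,
    fun i x ↦ ⟨hGK i x, hG i x⟩⟩

theorem exists_strictMono_tendstoUniformly_of_equicontinuous {α β : Type*} [TopologicalSpace α]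
    [CompactSpace α] [MetricSpace β] {K : Set β} (hK : IsCompact K) {F : ℕ → α → β}
    (hF : Equicontinuous F) (hFK : ∀ n x, F n x ∈ K) :
    ∃ φ : ℕ → ℕ, StrictMono φ ∧ ∃ f : α → β, Continuous f ∧
      TendstoUniformly (fun n ↦ F (φ n)) f atTop := by
  let G : ℕ → BoundedContinuousFunction α β := fun n ↦ .mkOfCompact ⟨F n, hF.continuous n⟩
  have hG : Equicontinuous ((↑) : range G → α → β) := by
    convert hF.comp (rangeSplitting G) with x
    exact congrArg DFunLike.coe (apply_rangeSplitting G x).symm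
  obtain ⟨f, -, φ, hφ, hlim⟩ :=
    (BoundedContinuousFunction.arzela_ascoli K hK (range G)
      (by rintro _ x ⟨n, rfl⟩; exact hFK n x) hG).isSeqCompact
      fun n ↦ subset_closure (mem_range_self n)
  exact ⟨φ, hφ, f, f.continuous, BoundedContinuousFunction.tendsto_iff_tendstoUniformly.1 hlim⟩

theorem stmt_8_general
    {X₀ X X₁ : Type*}
    [NormedAddCommGroup X₀] [NormedSpace ℝ X₀]
    [NormedAddCommGroup X] [NormedSpace ℝ X]
    [NormedAddCommGroup X₁] [NormedSpace ℝ X₁]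
    (i : X₀ →L[ℝ] X) (hi : IsCompactOperator i)
    (j : X →L[ℝ] X₁) (hj : Function.Injective j)
    (T : ℝ) (hT : 0 < T)
    (q : ℝ≥0∞) (hq1 : 1 < q)
    (u : ℕ → ℝ → X₀) (g : ℕ → ℝ → X₁) (a : ℕ → X₁)
    (hg_meas : ∀ k, AEStronglyMeasurable (g k) (volume.restrict (Set.Icc 0 T)))
    (C : ℝ≥0∞) (hC : C ≠ ∞)
    (hu_bdd : ∀ k, eLpNorm (u k) ∞ (volume.restrict (Set.Icc 0 T)) ≤ C)
    (C' : ℝ≥0∞) (hC' : C' ≠ ∞)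
    (hg_bdd : ∀ k, eLpNorm (g k) q (volume.restrict (Set.Icc 0 T)) ≤ C')
    (heq : ∀ k, ∀ᵐ t ∂(volume.restrict (Set.Icc 0 T)),
      j (i (u k t)) = a k + ∫ s in (0 : ℝ)..t, g k s) :
    ∃ φ : ℕ → ℕ, StrictMono φ ∧ ∃ v : ℕ → ℝ → X, ∃ vlim : ℝ → X,
      (∀ m, ContinuousOn (v m) (Set.Icc 0 T)) ∧
      (∀ m, ∀ᵐ t ∂(volume.restrict (Set.Icc 0 T)), v m t = i (u (φ m) t)) ∧
      ContinuousOn vlim (Set.Icc 0 T) ∧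
      TendstoUniformlyOn v vlim atTop (Set.Icc 0 T) := by
  set K := closure (i '' Metric.closedBall 0 C.toReal)
  have hK : IsCompact K := hi.isCompact_closure_image_closedBall _
  set h : ℕ → ℝ → X₁ := fun k t ↦ a k + ∫ s in (0 : ℝ)..t, g k s
  have hr := ENNReal.one_sub_toNNReal_inv_pos hq1
  have hHolder : ∀ k, HolderOnWith C'.toNNReal (1 - q.toNNReal⁻¹) (h k) (Icc 0 T) :=
    fun k s hs t ht ↦ by
      simpa only [h, edist_add_left] using holderOnWith_intervalIntegral hq1.le (hg_meas k)
        (by rw [ENNReal.coe_toNNReal hC']; exact hg_bdd k) s hs t ht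
  have hmaps : ∀ k, MapsTo (h k) (Icc 0 T) (j '' K) := fun k ↦
    ((hHolder k).continuousOn hr).mapsTo_of_ae_mem (hK.image j.continuous).isClosed
      (closure_interior_Icc hT.ne).symm.subset <| by
      filter_upwards [heq k, ae_norm_le_of_eLpNorm_top_le hC (hu_bdd k)] with t ht hut
      exact ⟨_, subset_closure (mem_image_of_mem _ (mem_closedBall_zero_iff.2 hut)), ht⟩
  obtain ⟨w, hequi, hw⟩ := Equicontinuous.exists_lift_of_isCompact hK j.continuous hj.injOn
    ((uniformEquicontinuous_restrict_iff _).2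
      (HolderOnWith.uniformEquicontinuousOn hr hHolder)).equicontinuous
    fun k t ↦ hmaps k t.2
  obtain ⟨φ, hφ, f, hf, hlim⟩ :=
    exists_strictMono_tendstoUniformly_of_equicontinuous hK hequi fun k t ↦ (hw k t).1
  refine ⟨φ, hφ, fun m ↦ IccExtend hT.le (w (φ m)), IccExtend hT.le f,
    fun m ↦ (hequi.continuous _).Icc_extend'.continuousOn, fun m ↦ ?_,
    hf.Icc_extend'.continuousOn, ?_⟩
  · filter_upwards [heq (φ m), ae_restrict_mem measurableSet_Icc] with t ht htI
    rw [IccExtend_of_mem _ _ htI]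
    exact hj ((hw _ _).2.trans ht.symm)
  · rw [tendstoUniformlyOn_iff_tendstoUniformly_comp_coe]
    simpa only [Function.comp_def, IccExtend_val] using hlim

/-- **Lions–Aubin lemma, part (ii).**
Let `X₀, X, X₁` be Banach spaces, `i : X₀ → X` a compact linear operator and
`j : X → X₁` injective and continuous.  Let `T > 0` and `1 < q ≤ ∞`.
If `(u_k)` is bounded in `L^∞(0,T;X₀)` and `j(i(u_k(t))) = a_k + ∫₀^t g_k(s) ds`
a.e. with `(g_k)` bounded in `L^q(0,T;X₁)`, then there is a subsequence `(u_{k_j})`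
and continuous representatives `v_j` of `i ∘ u_{k_j}` on `[0,T]` converging uniformly
on `[0,T]` to a continuous function `v`. -/
theorem stmt_8
    {X₀ X X₁ : Type*}
    [NormedAddCommGroup X₀] [NormedSpace ℝ X₀] [CompleteSpace X₀]
    [NormedAddCommGroup X] [NormedSpace ℝ X] [CompleteSpace X]
    [NormedAddCommGroup X₁] [NormedSpace ℝ X₁] [CompleteSpace X₁]
    (i : X₀ →L[ℝ] X) (hi : IsCompactOperator i)
    (j : X →L[ℝ] X₁) (hj : Function.Injective j)
    (T : ℝ) (hT : 0 < T)
    (q : ℝ≥0∞) (hq1 : 1 < q)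
    (u : ℕ → ℝ → X₀) (g : ℕ → ℝ → X₁) (a : ℕ → X₁)
    (hu_meas : ∀ k, AEStronglyMeasurable (u k) (volume.restrict (Set.Icc 0 T)))
    (hg_meas : ∀ k, AEStronglyMeasurable (g k) (volume.restrict (Set.Icc 0 T)))
    (C : ℝ≥0∞) (hC : C ≠ ∞)
    (hu_bdd : ∀ k, eLpNorm (u k) ∞ (volume.restrict (Set.Icc 0 T)) ≤ C)
    (C' : ℝ≥0∞) (hC' : C' ≠ ∞)
    (hg_bdd : ∀ k, eLpNorm (g k) q (volume.restrict (Set.Icc 0 T)) ≤ C')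
    (heq : ∀ k, ∀ᵐ t ∂(volume.restrict (Set.Icc 0 T)),
      j (i (u k t)) = a k + ∫ s in (0 : ℝ)..t, g k s) :
    ∃ φ : ℕ → ℕ, StrictMono φ ∧ ∃ v : ℕ → ℝ → X, ∃ vlim : ℝ → X,
      (∀ m, ContinuousOn (v m) (Set.Icc 0 T)) ∧
      (∀ m, ∀ᵐ t ∂(volume.restrict (Set.Icc 0 T)), v m t = i (u (φ m) t)) ∧
      ContinuousOn vlim (Set.Icc 0 T) ∧
      TendstoUniformlyOn v vlim atTop (Set.Icc 0 T) :=
  stmt_8_general i hi j hj T hT q hq1 u g a hg_meas C hC hu_bdd C' hC' hg_bdd heq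
end

section
/- Let (X, μ) be a finite measure space and C > 0. Let (u_k) and (n_k) be sequences of measurable real-valued functions on X with 0 ≤ u_k ≤ n_k ≤ C μ-a.e. and n_k > 0 μ-a.e. for every k. Let n, u, η be bounded measurable functions on X and assume: (a) n_k → n in L¹(μ); (b) for every g ∈ L¹(μ), ∫_X (u_k/n_k) g dμ → ∫_X η g dμ; (c) for every g ∈ L¹(μ), ∫_X u_k g dμ → ∫_X u g dμ. Then u = n·η μ-a.e. on X. (This is the identification η₁ n = u₁ of the weak-* limit of the quotients u_k/n_k in the proof of the existence theorem.) -/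
open MeasureTheory Filter Topology Set

/-- **Identification of the weak-* limit of the quotients `u_k / n_k`.**
On a finite measure space, if `0 ≤ u_k ≤ n_k ≤ C` a.e. with `n_k > 0` a.e.,
`n_k → n` in `L¹(μ)`, `u_k/n_k → η` weak-* in `L^∞`, and `u_k → u` weak-* in `L^∞`,
then `u = n·η` a.e. -/
theorem stmt_9 {X : Type*} [MeasurableSpace X] (μ : Measure X) [IsFiniteMeasure μ]
    (C : ℝ) (hC : 0 < C)
    (u n : ℕ → X → ℝ)
    (hu_meas : ∀ k, Measurable (u k)) (hn_meas : ∀ k, Measurable (n k))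
    (hbd : ∀ k, ∀ᵐ x ∂μ, 0 ≤ u k x ∧ u k x ≤ n k x ∧ n k x ≤ C)
    (hpos : ∀ k, ∀ᵐ x ∂μ, 0 < n k x)
    (nl ul η : X → ℝ)
    (hnl_meas : Measurable nl) (hnl_bdd : ∃ M : ℝ, ∀ x, |nl x| ≤ M)
    (hul_meas : Measurable ul) (hul_bdd : ∃ M : ℝ, ∀ x, |ul x| ≤ M)
    (hη_meas : Measurable η) (hη_bdd : ∃ M : ℝ, ∀ x, |η x| ≤ M)
    (ha : Tendsto (fun k => ∫ x, |n k x - nl x| ∂μ) atTop (𝓝 0))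
    (hb : ∀ g : X → ℝ, Integrable g μ →
      Tendsto (fun k => ∫ x, (u k x / n k x) * g x ∂μ) atTop (𝓝 (∫ x, η x * g x ∂μ)))
    (hc : ∀ g : X → ℝ, Integrable g μ →
      Tendsto (fun k => ∫ x, u k x * g x ∂μ) atTop (𝓝 (∫ x, ul x * g x ∂μ))) :
    ∀ᵐ x ∂μ, ul x = nl x * η x := by
  classical
  obtain ⟨M, hM⟩ := hnl_bdd
  obtain ⟨Mu, hMu⟩ := hul_bdd
  obtain ⟨Mη, hMη⟩ := hη_bdd
  -- a bounded measurable function is integrable on a finite measure space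
  have intble : ∀ (f : X → ℝ) (c : ℝ), Measurable f → (∀ᵐ x ∂μ, |f x| ≤ c) →
      Integrable f μ := by
    intro f c hf hbdd
    exact (integrable_const c).mono' hf.aestronglyMeasurable
      (hbdd.mono fun x hx => by simpa [Real.norm_eq_abs] using hx)
  -- quotients are a.e. bounded by 1
  have hquot : ∀ k, ∀ᵐ x ∂μ, |u k x / n k x| ≤ 1 := by
    intro k
    filter_upwards [hbd k, hpos k] with x hx hxp
    rw [abs_le]
    constructor
    · linarith [div_nonneg hx.1 hxp.le]
    · exact (div_le_one hxp).mpr hx.2.1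
  have key : ∀ s : Set X, MeasurableSet s →
      ∫ x in s, ul x ∂μ = ∫ x in s, nl x * η x ∂μ := by
    intro s hs
    set g : X → ℝ := s.indicator (fun _ => 1) with hgdef
    have hg_meas : Measurable g := measurable_const.indicator hs
    have hg_bd : ∀ x, |g x| ≤ 1 := by
      intro x; by_cases hx : x ∈ s <;> simp [hgdef, hx]
    have hg_int : Integrable g μ := intble g 1 hg_meas (ae_of_all _ hg_bd)
    have hnlg_int : Integrable (fun x => nl x * g x) μ := by
      refine intble _ M (hnl_meas.mul hg_meas) (ae_of_all _ fun x => ?_)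
      calc |nl x * g x| = |nl x| * |g x| := abs_mul _ _
        _ ≤ M * 1 := mul_le_mul (hM x) (hg_bd x) (abs_nonneg _) ((abs_nonneg _).trans (hM x))
        _ = M := mul_one M
    -- limits
    have hA := hc g hg_int
    have hB := hb (fun x => nl x * g x) hnlg_int
    -- integrability of the sequence terms
    have hint1 : ∀ k, Integrable (fun x => u k x * g x) μ := by
      intro k
      refine intble _ C ((hu_meas k).mul hg_meas) ?_
      filter_upwards [hbd k] with x hx
      calc |u k x * g x| = |u k x| * |g x| := abs_mul _ _
        _ ≤ C * 1 := by
            refine mul_le_mul ?_ (hg_bd x) (abs_nonneg _) hC.le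
            rw [abs_of_nonneg hx.1]; linarith [hx.2.1, hx.2.2]
        _ = C := mul_one C
    have hint2 : ∀ k, Integrable (fun x => (u k x / n k x) * (nl x * g x)) μ := by
      intro k
      refine intble _ M (((hu_meas k).div (hn_meas k)).mul (hnl_meas.mul hg_meas)) ?_
      filter_upwards [hquot k] with x hx
      calc |(u k x / n k x) * (nl x * g x)| = |u k x / n k x| * (|nl x| * |g x|) := by
            rw [abs_mul, abs_mul]
        _ ≤ 1 * (M * 1) := by
            refine mul_le_mul hx (mul_le_mul (hM x) (hg_bd x) (abs_nonneg _)
              ((abs_nonneg _).trans (hM x))) (mul_nonneg (abs_nonneg _) (abs_nonneg _))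
              zero_le_one
        _ = M := by ring
    have habs_int : ∀ k, Integrable (fun x => |n k x - nl x|) μ := by
      intro k
      refine ((intble (n k) C (hn_meas k) ?_).sub (intble nl M hnl_meas
        (ae_of_all _ hM))).abs
      filter_upwards [hbd k] with x hx
      rw [abs_of_nonneg (le_trans hx.1 hx.2.1)]; exact hx.2.2
    -- the difference of the two integral sequences is controlled by the L¹ distance
    have hdiff : ∀ k,
        |(∫ x, u k x * g x ∂μ) - ∫ x, (u k x / n k x) * (nl x * g x) ∂μ| ≤
          ∫ x, |n k x - nl x| ∂μ := by
      intro k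
      rw [← integral_sub (hint1 k) (hint2 k)]
      calc |∫ x, (u k x * g x - (u k x / n k x) * (nl x * g x)) ∂μ|
          ≤ ∫ x, |u k x * g x - (u k x / n k x) * (nl x * g x)| ∂μ := by
            simpa [Real.norm_eq_abs] using
              norm_integral_le_integral_norm
                (fun x => u k x * g x - (u k x / n k x) * (nl x * g x))
        _ ≤ ∫ x, |n k x - nl x| ∂μ := by
            refine integral_mono_of_nonneg (ae_of_all _ fun x => abs_nonneg _)
              (habs_int k) ?_
            filter_upwards [hpos k, hquot k] with x hxp hxq
            have hne : n k x ≠ 0 := hxp.ne'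
            have : u k x * g x - (u k x / n k x) * (nl x * g x)
                = (u k x / n k x) * ((n k x - nl x) * g x) := by
              field_simp
            rw [this]
            calc |(u k x / n k x) * ((n k x - nl x) * g x)|
                = |u k x / n k x| * (|n k x - nl x| * |g x|) := by rw [abs_mul, abs_mul]
              _ ≤ 1 * (|n k x - nl x| * 1) := by
                  refine mul_le_mul hxq (mul_le_mul_of_nonneg_left (hg_bd x)
                    (abs_nonneg _)) (mul_nonneg (abs_nonneg _) (abs_nonneg _)) zero_le_one
              _ = |n k x - nl x| := by ring
    have hAB0 : Tendsto (fun k => (∫ x, u k x * g x ∂μ) -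
        ∫ x, (u k x / n k x) * (nl x * g x) ∂μ) atTop (𝓝 0) := by
      refine squeeze_zero_norm (fun k => ?_) ha
      simpa [Real.norm_eq_abs] using hdiff k
    have hA' : Tendsto (fun k => ∫ x, u k x * g x ∂μ) atTop
        (𝓝 (0 + ∫ x, η x * (nl x * g x) ∂μ)) := by
      have := hAB0.add hB
      simpa using this
    have heq : ∫ x, ul x * g x ∂μ = ∫ x, η x * (nl x * g x) ∂μ := by
      have := tendsto_nhds_unique hA hA'
      simpa using this
    -- rewrite as set integrals
    have h1 : ∫ x, ul x * g x ∂μ = ∫ x in s, ul x ∂μ := by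
      rw [← integral_indicator hs]
      congr 1; ext x
      by_cases hx : x ∈ s <;> simp [hgdef, hx]
    have h2 : ∫ x, η x * (nl x * g x) ∂μ = ∫ x in s, nl x * η x ∂μ := by
      rw [← integral_indicator hs]
      congr 1; ext x
      by_cases hx : x ∈ s <;> simp [hgdef, hx, mul_comm]
    rw [← h1, ← h2, heq]
  have hul_int : Integrable ul μ :=
    (integrable_const Mu).mono' hul_meas.aestronglyMeasurable
      (ae_of_all _ fun x => by simpa [Real.norm_eq_abs] using hMu x)
  have hnlη_int : Integrable (fun x => nl x * η x) μ := by
    refine (integrable_const (M * Mη)).mono' (hnl_meas.mul hη_meas).aestronglyMeasurable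
      (ae_of_all _ fun x => ?_)
    simp only [Real.norm_eq_abs, abs_mul]
    exact mul_le_mul (hM x) (hMη x) (abs_nonneg _) ((abs_nonneg _).trans (hM x))
  exact ae_eq_of_forall_setIntegral_eq_of_sigmaFinite
    (fun s hs _ => hul_int.integrableOn)
    (fun s hs _ => hnlη_int.integrableOn)
    (fun s hs _ => key s hs)
end

section
/- Let (X, μ) be a finite measure space, C > 0, and δ > 0. Let (f_k) be a sequence of measurable functions on X with 0 ≤ f_k ≤ C μ-a.e., and let f be measurable with 0 ≤ f ≤ C μ-a.e. Assume that for every g ∈ L¹(μ), ∫_X f_k g dμ → ∫_X f g dμ as k → ∞. If μ({x : f(x) ≥ 1 + 2δ}) > 0, then liminf_{k→∞} μ({x : f_k(x) ≥ 1 + δ}) > 0. -/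
/-!
Test the weak-* convergence against the indicator of `A = {f ≥ 1 + 2δ}`: the integrals
`∫_A f_k` tend to `∫_A f ≥ (1 + 2δ) μ(A)`. On the other hand `f_k ≤ 1 + δ + C · 1_{f_k ≥ 1 + δ}`,
so `∫_A f_k ≤ (1 + δ) μ(A) + C μ{f_k ≥ 1 + δ}`. Comparing, `μ{f_k ≥ 1 + δ}` is eventually
bounded below by a positive constant of order `δ μ(A) / C`.
-/

open MeasureTheory Filter Topology

section

variable {X : Type*} [MeasurableSpace X] {μ : Measure X}

lemma integral_mul_indicator_one (f : X → ℝ) {s : Set X} (hs : MeasurableSet s) :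
    ∫ x, f x * s.indicator 1 x ∂μ = ∫ x in s, f x ∂μ := by
  rw [← integral_indicator hs]
  congr 1
  ext x
  by_cases hx : x ∈ s <;> simp [hx]

lemma setIntegral_le_add_mul_measureReal_setOf_le [IsFiniteMeasure μ] {f : X → ℝ} {s : Set X}
    {t C : ℝ} (hf : Measurable f) (hfC : ∀ᵐ x ∂μ, f x ≤ C)
    (ht : 0 ≤ t) (hC : 0 ≤ C) :
    ∫ x in s, f x ∂μ ≤ t * μ.real s + C * μ.real {x | t ≤ f x} := by
  set B := {x | t ≤ f x}
  have hB : MeasurableSet B := measurableSet_le measurable_const hf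
  have hrhs : 0 ≤ t * μ.real s + C * μ.real B := by positivity
  by_cases hfi : IntegrableOn f s μ
  swap
  · rwa [integral_undef hfi]
  have hbound : ∀ᵐ x ∂μ, f x ≤ t + C * B.indicator 1 x := by
    filter_upwards [hfC] with x hx
    by_cases hxB : x ∈ B
    · simp only [Set.indicator_of_mem hxB, Pi.one_apply, mul_one]
      linarith
    · simp only [Set.indicator_of_notMem hxB, mul_zero, add_zero]
      exact (not_le.mp hxB).le
  have hind : IntegrableOn (B.indicator (1 : X → ℝ)) s μ :=
    (integrable_const 1).indicator hB
  calc ∫ x in s, f x ∂μ ≤ ∫ x in s, (t + C * B.indicator 1 x) ∂μ :=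
        setIntegral_mono_ae hfi ((integrable_const t).add (hind.const_mul C)) hbound
    _ = t * μ.real s + C * μ.real (s ∩ B) := by
        rw [integral_add (integrable_const t) (hind.const_mul C), setIntegral_const,
          integral_const_mul, integral_indicator_one hB, measureReal_restrict_apply hB,
          smul_eq_mul, mul_comm, Set.inter_comm]
    _ ≤ t * μ.real s + C * μ.real B := by
        gcongr
        exacts [measure_ne_top μ B, Set.inter_subset_right]

lemma liminf_measure_setOf_le_pos [IsFiniteMeasure μ] {u : ℕ → X → ℝ} {s : Set X}
    {t C L : ℝ} (hu : ∀ k, Measurable (u k))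
    (huC : ∀ k, ∀ᵐ x ∂μ, u k x ≤ C) (ht : 0 ≤ t) (hC : 0 < C)
    (hlim : Tendsto (fun k => ∫ x in s, u k x ∂μ) atTop (𝓝 L)) (htL : t * μ.real s < L) :
    0 < liminf (fun k => μ {x | t ≤ u k x}) atTop := by
  obtain ⟨c, htc, hcL⟩ := exists_between htL
  have hε : 0 < (c - t * μ.real s) / C := div_pos (sub_pos.mpr htc) hC
  have hbound : ∀ᶠ k in atTop, ENNReal.ofReal ((c - t * μ.real s) / C) ≤ μ {x | t ≤ u k x} := by
    filter_upwards [hlim.eventually_const_lt hcL] with k hk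
    have hle := hk.trans_le (setIntegral_le_add_mul_measureReal_setOf_le (hu k) (huC k) ht hC.le)
    refine ENNReal.ofReal_le_of_le_toReal ?_
    rw [div_le_iff₀ hC]
    change c - t * μ.real s ≤ μ.real {x | t ≤ u k x} * C
    linarith
  exact (ENNReal.ofReal_pos.mpr hε).trans_le (le_liminf_of_le (by isBoundedDefault) hbound)

end

/-- On a finite measure space, if `0 ≤ f_k ≤ C` a.e., `0 ≤ f ≤ C` a.e., `f_k → f`
weak-* in `L^∞`, and `μ({f ≥ 1 + 2δ}) > 0`, then `liminf_k μ({f_k ≥ 1 + δ}) > 0`. -/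
theorem stmt_10 {X : Type*} [MeasurableSpace X] (μ : Measure X) [IsFiniteMeasure μ]
    (C : ℝ) (hC : 0 < C) (δ : ℝ) (hδ : 0 < δ)
    (f : ℕ → X → ℝ) (hf_meas : ∀ k, Measurable (f k))
    (hf_bd : ∀ k, ∀ᵐ x ∂μ, 0 ≤ f k x ∧ f k x ≤ C)
    (fl : X → ℝ) (hfl_meas : Measurable fl) (hfl_bd : ∀ᵐ x ∂μ, 0 ≤ fl x ∧ fl x ≤ C)
    (hw : ∀ g : X → ℝ, Integrable g μ →
      Tendsto (fun k => ∫ x, f k x * g x ∂μ) atTop (𝓝 (∫ x, fl x * g x ∂μ)))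
    (hpos : 0 < μ {x | 1 + 2 * δ ≤ fl x}) :
    0 < Filter.liminf (fun k => μ {x | 1 + δ ≤ f k x}) atTop := by
  set A := {x | 1 + 2 * δ ≤ fl x}
  have hA : MeasurableSet A := measurableSet_le measurable_const hfl_meas
  have hμA : 0 < μ.real A := ENNReal.toReal_pos hpos.ne' (measure_ne_top μ A)
  have hfl_int : Integrable fl μ :=
    .of_bound hfl_meas.aestronglyMeasurable C <| hfl_bd.mono fun x hx => by
      rw [Real.norm_eq_abs, abs_of_nonneg hx.1]
      exact hx.2
  have hlim : Tendsto (fun k => ∫ x in A, f k x ∂μ) atTop (𝓝 (∫ x in A, fl x ∂μ)) := by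
    simpa only [integral_mul_indicator_one _ hA] using
      hw (A.indicator 1) ((integrable_const 1).indicator hA)
  have hlow : (1 + 2 * δ) * μ.real A ≤ ∫ x in A, fl x ∂μ :=
    setIntegral_ge_of_const_le_real hA (measure_ne_top μ A) (fun _ hx => hx) hfl_int.integrableOn
  refine liminf_measure_setOf_le_pos hf_meas (fun k => (hf_bd k).mono fun _ hx => hx.2)
    (by positivity) hC hlim ?_
  nlinarith
end
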